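/- arXiv:1301.7483 — 2 statements merged into one kernel-verified Lean document; each statement's English description precedes it below -/
import Mathlib

section
/- Let ψ_1, ψ_2 : ℝ^2 → ℂ and A_1, A_2 : ℝ^2 → ℝ be smooth satisfying (D_1 + i D_2)ψ_k = 0 for k = 1,2, D_1 ψ_2 = D_2 ψ_1, F_{12} = μ Im(conj(ψ_2) ψ_1) with μ ∈ {+1,−1}, and F_{12} nonzero at a point. Then D_j D_j ψ_k − i F_{jk} ψ_j = 0 for k = 1, 2 (sum over j = 1, 2), i.e. (ψ, A) with A_0 = 0 is a stationary solution of both the gauged harmonic map heat flow and the gauged Schrödinger map systems. -/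
noncomputable section
open Complex MeasureTheory Filter

/-- Partial derivative in the `x¹` direction on `ℝ × ℝ`. -/
def q1 {E : Type*} [NormedAddCommGroup E] [NormedSpace ℝ E]
    (f : ℝ × ℝ → E) (p : ℝ × ℝ) : E := deriv (fun s => f (s, p.2)) p.1

/-- Partial derivative in the `x²` direction on `ℝ × ℝ`. -/
def q2 {E : Type*} [NormedAddCommGroup E] [NormedSpace ℝ E]
    (f : ℝ × ℝ → E) (p : ℝ × ℝ) : E := deriv (fun s => f (p.1, s)) p.2

/-- Covariant derivative `D₁ = ∂₁ + i A₁`. -/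
def Dc1 (A1 : ℝ × ℝ → ℝ) (f : ℝ × ℝ → ℂ) (p : ℝ × ℝ) : ℂ :=
  q1 f p + Complex.I * (A1 p : ℂ) * f p

/-- Covariant derivative `D₂ = ∂₂ + i A₂`. -/
def Dc2 (A2 : ℝ × ℝ → ℝ) (f : ℝ × ℝ → ℂ) (p : ℝ × ℝ) : ℂ :=
  q2 f p + Complex.I * (A2 p : ℂ) * f p

/-- Curvature `F₁₂ = ∂₁A₂ − ∂₂A₁`. -/
def curvF (A1 A2 : ℝ × ℝ → ℝ) (p : ℝ × ℝ) : ℝ := q1 A2 p - q2 A1 p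


variable {E : Type*} [NormedAddCommGroup E] [NormedSpace ℝ E]

lemma Dc1_neg (A1 : ℝ × ℝ → ℝ) (g : ℝ × ℝ → ℂ) (p : ℝ × ℝ) :
    Dc1 A1 (fun q => -g q) p = -Dc1 A1 g p := by
  simp only [Dc1, q1, deriv.fun_neg]; ring

lemma Dc2_neg (A2 : ℝ × ℝ → ℝ) (g : ℝ × ℝ → ℂ) (p : ℝ × ℝ) :
    Dc2 A2 (fun q => -g q) p = -Dc2 A2 g p := by
  simp only [Dc2, q2, deriv.fun_neg]; ring

lemma line1_diff {f : ℝ × ℝ → E} (hf : ContDiff ℝ (⊤ : ℕ∞) f) (y : ℝ) :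
    Differentiable ℝ (fun s => f (s, y)) :=
  (hf.differentiable (by simp)).comp (differentiable_id.prodMk (differentiable_const y))

lemma line2_diff {f : ℝ × ℝ → E} (hf : ContDiff ℝ (⊤ : ℕ∞) f) (x : ℝ) :
    Differentiable ℝ (fun s => f (x, s)) :=
  (hf.differentiable (by simp)).comp ((differentiable_const x).prodMk differentiable_id)

lemma hasDerivAt_q1 {f : ℝ × ℝ → E} (hf : ContDiff ℝ (⊤ : ℕ∞) f) (p : ℝ × ℝ) :
    HasDerivAt (fun s => f (s, p.2)) (q1 f p) p.1 :=
  ((line1_diff hf p.2) p.1).hasDerivAt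

lemma hasDerivAt_q2 {f : ℝ × ℝ → E} (hf : ContDiff ℝ (⊤ : ℕ∞) f) (p : ℝ × ℝ) :
    HasDerivAt (fun s => f (p.1, s)) (q2 f p) p.2 :=
  ((line2_diff hf p.1) p.2).hasDerivAt

lemma q1_eq_fderiv {f : ℝ × ℝ → E} (hf : ContDiff ℝ (⊤ : ℕ∞) f) (p : ℝ × ℝ) :
    q1 f p = fderiv ℝ f p (1, 0) := by
  have h : HasDerivAt (fun s : ℝ => (s, p.2)) ((1:ℝ), (0:ℝ)) p.1 :=
    (hasDerivAt_id p.1).prodMk (hasDerivAt_const _ _)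
  have h2 := ((hf.differentiable (by simp)) p).hasFDerivAt.comp_hasDerivAt p.1 (by simpa using h)
  exact (h2.deriv).symm ▸ rfl

lemma q2_eq_fderiv {f : ℝ × ℝ → E} (hf : ContDiff ℝ (⊤ : ℕ∞) f) (p : ℝ × ℝ) :
    q2 f p = fderiv ℝ f p (0, 1) := by
  have h : HasDerivAt (fun s : ℝ => (p.1, s)) ((0:ℝ), (1:ℝ)) p.2 :=
    (hasDerivAt_const _ _).prodMk (hasDerivAt_id p.2)
  have h2 := ((hf.differentiable (by simp)) p).hasFDerivAt.comp_hasDerivAt p.2 (by simpa using h)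
  exact (h2.deriv).symm ▸ rfl

lemma q1_smooth {f : ℝ × ℝ → E} (hf : ContDiff ℝ (⊤ : ℕ∞) f) : ContDiff ℝ (⊤ : ℕ∞) (q1 f) := by
  have : q1 f = fun p => fderiv ℝ f p (1, 0) := funext fun p => q1_eq_fderiv hf p
  rw [this]
  exact (hf.fderiv_right (by simp)).clm_apply contDiff_const

lemma q2_smooth {f : ℝ × ℝ → E} (hf : ContDiff ℝ (⊤ : ℕ∞) f) : ContDiff ℝ (⊤ : ℕ∞) (q2 f) := by
  have : q2 f = fun p => fderiv ℝ f p (0, 1) := funext fun p => q2_eq_fderiv hf p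
  rw [this]
  exact (hf.fderiv_right (by simp)).clm_apply contDiff_const

lemma clairaut {f : ℝ × ℝ → E} (hf : ContDiff ℝ (⊤ : ℕ∞) f) (p : ℝ × ℝ) :
    q1 (q2 f) p = q2 (q1 f) p := by
  have hd : Differentiable ℝ (fderiv ℝ f) := (hf.fderiv_right (m := (⊤ : ℕ∞)) (by simp)).differentiable (by simp)
  have hsymm := second_derivative_symmetric
    (f' := fderiv ℝ f) (f'' := fderiv ℝ (fderiv ℝ f) p)
    (fun y => ((hf.differentiable (by simp)) y).hasFDerivAt) ((hd p).hasFDerivAt)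
  have e2 : q2 f = fun q => fderiv ℝ f q (0, 1) := funext fun q => q2_eq_fderiv hf q
  have e1 : q1 f = fun q => fderiv ℝ f q (1, 0) := funext fun q => q1_eq_fderiv hf q
  have h12 : q1 (q2 f) p = fderiv ℝ (fderiv ℝ f) p (1, 0) (0, 1) := by
    rw [e2, q1_eq_fderiv ((hf.fderiv_right (by simp)).clm_apply contDiff_const) p]
    have hh : HasFDerivAt (fun q => fderiv ℝ f q ((0:ℝ), (1:ℝ)))
        ((ContinuousLinearMap.apply ℝ E ((0:ℝ), (1:ℝ))).comp (fderiv ℝ (fderiv ℝ f) p)) p :=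
      ((ContinuousLinearMap.apply ℝ E ((0:ℝ), (1:ℝ))).hasFDerivAt).comp p (hd p).hasFDerivAt
    rw [hh.fderiv]; rfl
  have h21 : q2 (q1 f) p = fderiv ℝ (fderiv ℝ f) p (0, 1) (1, 0) := by
    rw [e1, q2_eq_fderiv ((hf.fderiv_right (by simp)).clm_apply contDiff_const) p]
    have hh : HasFDerivAt (fun q => fderiv ℝ f q ((1:ℝ), (0:ℝ)))
        ((ContinuousLinearMap.apply ℝ E ((1:ℝ), (0:ℝ))).comp (fderiv ℝ (fderiv ℝ f) p)) p :=
      ((ContinuousLinearMap.apply ℝ E ((1:ℝ), (0:ℝ))).hasFDerivAt).comp p (hd p).hasFDerivAt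
    rw [hh.fderiv]; rfl
  rw [h12, h21, hsymm]
open Complex

lemma q1_Dc2 {A2 : ℝ × ℝ → ℝ} {f : ℝ × ℝ → ℂ} (hA2 : ContDiff ℝ (⊤ : ℕ∞) A2)
    (hf : ContDiff ℝ (⊤ : ℕ∞) f) (p : ℝ × ℝ) :
    q1 (Dc2 A2 f) p
      = q1 (q2 f) p + Complex.I * ((q1 A2 p : ℝ) : ℂ) * f p + Complex.I * (A2 p : ℂ) * q1 f p := by
  have hA2r : HasDerivAt (fun s => ((A2 (s, p.2) : ℝ) : ℂ)) ((q1 A2 p : ℝ) : ℂ) p.1 :=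
    (hasDerivAt_q1 hA2 p).ofReal_comp
  have hfr := hasDerivAt_q1 hf p
  have hq2r := hasDerivAt_q1 (q2_smooth hf) p
  have hmul := (hA2r.const_mul Complex.I).mul hfr
  have hsum := hq2r.add hmul
  have := hsum.deriv
  simp only [q1, Dc2, Prod.mk.eta] at this ⊢
  exact this.trans (by ring)

lemma q2_Dc1 {A1 : ℝ × ℝ → ℝ} {f : ℝ × ℝ → ℂ} (hA1 : ContDiff ℝ (⊤ : ℕ∞) A1)
    (hf : ContDiff ℝ (⊤ : ℕ∞) f) (p : ℝ × ℝ) :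
    q2 (Dc1 A1 f) p
      = q2 (q1 f) p + Complex.I * ((q2 A1 p : ℝ) : ℂ) * f p + Complex.I * (A1 p : ℂ) * q2 f p := by
  have hA1r : HasDerivAt (fun s => ((A1 (p.1, s) : ℝ) : ℂ)) ((q2 A1 p : ℝ) : ℂ) p.2 :=
    (hasDerivAt_q2 hA1 p).ofReal_comp
  have hfr := hasDerivAt_q2 hf p
  have hq1r := hasDerivAt_q2 (q1_smooth hf) p
  have hmul := (hA1r.const_mul Complex.I).mul hfr
  have hsum := hq1r.add hmul
  have := hsum.deriv
  simp only [q2, Dc1, Prod.mk.eta] at this ⊢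
  exact this.trans (by ring)

lemma comm_lemma {A1 A2 : ℝ × ℝ → ℝ} {f : ℝ × ℝ → ℂ} (hA1 : ContDiff ℝ (⊤ : ℕ∞) A1)
    (hA2 : ContDiff ℝ (⊤ : ℕ∞) A2) (hf : ContDiff ℝ (⊤ : ℕ∞) f) (p : ℝ × ℝ) :
    Dc1 A1 (Dc2 A2 f) p - Dc2 A2 (Dc1 A1 f) p = Complex.I * (curvF A1 A2 p : ℂ) * f p := by
  have e1 : Dc1 A1 (Dc2 A2 f) p = q1 (Dc2 A2 f) p + Complex.I * (A1 p : ℂ) * Dc2 A2 f p := rfl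
  have e2 : Dc2 A2 (Dc1 A1 f) p = q2 (Dc1 A1 f) p + Complex.I * (A2 p : ℂ) * Dc1 A1 f p := rfl
  rw [e1, e2, q1_Dc2 hA2 hf p, q2_Dc1 hA1 hf p, clairaut hf p]
  simp only [Dc1, Dc2, curvF]
  push_cast
  ring


theorem stmt6 (ψ1 ψ2 : ℝ × ℝ → ℂ) (A1 A2 : ℝ × ℝ → ℝ) (μ : ℝ)
    (hμ : μ = 1 ∨ μ = -1)
    (hψ1 : ContDiff ℝ (⊤ : ℕ∞) ψ1) (hψ2 : ContDiff ℝ (⊤ : ℕ∞) ψ2)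
    (hA1 : ContDiff ℝ (⊤ : ℕ∞) A1) (hA2 : ContDiff ℝ (⊤ : ℕ∞) A2)
    (hsd1 : ∀ p, Dc1 A1 ψ1 p + Complex.I * Dc2 A2 ψ1 p = 0)
    (hsd2 : ∀ p, Dc1 A1 ψ2 p + Complex.I * Dc2 A2 ψ2 p = 0)
    (hcomp : ∀ p, Dc1 A1 ψ2 p = Dc2 A2 ψ1 p)
    (hcurv : ∀ p, curvF A1 A2 p = μ * ((starRingEnd ℂ) (ψ2 p) * ψ1 p).im)
    (hF : ∃ p : ℝ × ℝ, curvF A1 A2 p ≠ 0) :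
    ∀ p : ℝ × ℝ,
      -- k = 1 : D_j D_j ψ₁ − i F_{21} ψ₂ = 0, with F_{21} = −F_{12}
      (Dc1 A1 (Dc1 A1 ψ1) p + Dc2 A2 (Dc2 A2 ψ1) p
        - Complex.I * ((-(curvF A1 A2 p) : ℝ) : ℂ) * ψ2 p = 0) ∧
      -- k = 2 : D_j D_j ψ₂ − i F_{12} ψ₁ = 0
      (Dc1 A1 (Dc1 A1 ψ2) p + Dc2 A2 (Dc2 A2 ψ2) p
        - Complex.I * ((curvF A1 A2 p : ℝ) : ℂ) * ψ1 p = 0) := by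
  have hcmp : Dc1 A1 ψ2 = Dc2 A2 ψ1 := funext hcomp
  have hc : Dc2 A2 ψ2 = fun q => -(Dc1 A1 ψ1 q) := funext fun q => by
    have h1 := hsd1 q; have h2 := hsd2 q; have h3 := hcomp q
    linear_combination (-Complex.I) * h2 + Complex.I * h3 + h1 + (Dc2 A2 ψ2 q) * Complex.I_sq
  intro p
  constructor
  · have c2 := comm_lemma hA1 hA2 hψ2 p
    rw [hc, Dc1_neg, hcmp] at c2
    push_cast
    linear_combination -c2
  · have c1 := comm_lemma hA1 hA2 hψ1 p
    rw [← hcmp] at c1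
    have e : Dc2 A2 (Dc2 A2 ψ2) p = -(Dc2 A2 (Dc1 A1 ψ1) p) := by rw [hc, Dc2_neg]
    push_cast
    linear_combination c1 + e
end
end

section
/- Let ψ_1, ψ_2, A_0, A_1, A_2 be smooth on [0,T] × ℝ^2 satisfying the gradient-flow system with F_{0j} = μ Im(conj(ψ_k) D_j ψ_k) − ∂_k F_{jk}. Then (∂_t − Δ) F_{12} = μ[ −2 Im(conj(D_2 ψ_k) D_1 ψ_k) + F_{12} (|ψ_1|^2 + |ψ_2|^2) ], where F_{αβ} = ∂_α A_β − ∂_β A_α and summation is over k = 1, 2. -/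
noncomputable section
open Complex MeasureTheory Filter

/-- Partial derivative in the time direction on `ℝ × ℝ × ℝ` (coords `(t, x¹, x²)`). -/
def P0 {E : Type*} [NormedAddCommGroup E] [NormedSpace ℝ E]
    (f : ℝ × ℝ × ℝ → E) (p : ℝ × ℝ × ℝ) : E := deriv (fun s => f (s, p.2)) p.1

/-- Partial derivative in the `x¹` direction. -/
def P1 {E : Type*} [NormedAddCommGroup E] [NormedSpace ℝ E]
    (f : ℝ × ℝ × ℝ → E) (p : ℝ × ℝ × ℝ) : E := deriv (fun s => f (p.1, s, p.2.2)) p.2.1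

/-- Partial derivative in the `x²` direction. -/
def P2 {E : Type*} [NormedAddCommGroup E] [NormedSpace ℝ E]
    (f : ℝ × ℝ × ℝ → E) (p : ℝ × ℝ × ℝ) : E := deriv (fun s => f (p.1, p.2.1, s)) p.2.2

/-- Covariant derivative `D₀ = ∂ₜ + i A₀`. -/
def CD0 (A0 : ℝ × ℝ × ℝ → ℝ) (f : ℝ × ℝ × ℝ → ℂ) (p : ℝ × ℝ × ℝ) : ℂ :=
  P0 f p + Complex.I * (A0 p : ℂ) * f p

/-- Covariant derivative `D₁ = ∂₁ + i A₁`. -/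
def CD1 (A1 : ℝ × ℝ × ℝ → ℝ) (f : ℝ × ℝ × ℝ → ℂ) (p : ℝ × ℝ × ℝ) : ℂ :=
  P1 f p + Complex.I * (A1 p : ℂ) * f p

/-- Covariant derivative `D₂ = ∂₂ + i A₂`. -/
def CD2 (A2 : ℝ × ℝ × ℝ → ℝ) (f : ℝ × ℝ × ℝ → ℂ) (p : ℝ × ℝ × ℝ) : ℂ :=
  P2 f p + Complex.I * (A2 p : ℂ) * f p

/-- Curvature `F₀₁ = ∂₀A₁ − ∂₁A₀`. -/
def F01 (A0 A1 : ℝ × ℝ × ℝ → ℝ) (p : ℝ × ℝ × ℝ) : ℝ := P0 A1 p - P1 A0 p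

/-- Curvature `F₀₂ = ∂₀A₂ − ∂₂A₀`. -/
def F02 (A0 A2 : ℝ × ℝ × ℝ → ℝ) (p : ℝ × ℝ × ℝ) : ℝ := P0 A2 p - P2 A0 p

/-- Curvature `F₁₂ = ∂₁A₂ − ∂₂A₁`. -/
def F12 (A1 A2 : ℝ × ℝ × ℝ → ℝ) (p : ℝ × ℝ × ℝ) : ℝ := P1 A2 p - P2 A1 p

section aux
variable {E : Type*} [NormedAddCommGroup E] [NormedSpace ℝ E]

lemma hasDerivAt_slice0 {f : ℝ × ℝ × ℝ → E} (hf : Differentiable ℝ f) (p : ℝ × ℝ × ℝ) :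
    HasDerivAt (fun s => f (s, p.2)) (fderiv ℝ f p (1, 0, 0)) p.1 := by
  have h1 : HasDerivAt (fun s : ℝ => ((s, p.2) : ℝ × ℝ × ℝ)) ((1:ℝ), ((0:ℝ), (0:ℝ))) p.1 :=
    HasDerivAt.prodMk (hasDerivAt_id _) (hasDerivAt_const _ _)
  have h2 := (hf (p.1, p.2)).hasFDerivAt.comp_hasDerivAt p.1 h1
  simpa [Function.comp_def] using h2

lemma hasDerivAt_slice1 {f : ℝ × ℝ × ℝ → E} (hf : Differentiable ℝ f) (p : ℝ × ℝ × ℝ) :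
    HasDerivAt (fun s => f (p.1, s, p.2.2)) (fderiv ℝ f p (0, 1, 0)) p.2.1 := by
  have h1 : HasDerivAt (fun s : ℝ => ((p.1, s, p.2.2) : ℝ × ℝ × ℝ)) ((0:ℝ), ((1:ℝ), (0:ℝ))) p.2.1 :=
    HasDerivAt.prodMk (hasDerivAt_const _ _) (HasDerivAt.prodMk (hasDerivAt_id _) (hasDerivAt_const _ _))
  have h2 := (hf (p.1, p.2.1, p.2.2)).hasFDerivAt.comp_hasDerivAt p.2.1 h1
  simpa [Function.comp_def] using h2

lemma hasDerivAt_slice2 {f : ℝ × ℝ × ℝ → E} (hf : Differentiable ℝ f) (p : ℝ × ℝ × ℝ) :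
    HasDerivAt (fun s => f (p.1, p.2.1, s)) (fderiv ℝ f p (0, 0, 1)) p.2.2 := by
  have h1 : HasDerivAt (fun s : ℝ => ((p.1, p.2.1, s) : ℝ × ℝ × ℝ)) ((0:ℝ), ((0:ℝ), (1:ℝ))) p.2.2 :=
    HasDerivAt.prodMk (hasDerivAt_const _ _) (HasDerivAt.prodMk (hasDerivAt_const _ _) (hasDerivAt_id _))
  have h2 := (hf (p.1, p.2.1, p.2.2)).hasFDerivAt.comp_hasDerivAt p.2.2 h1
  simpa [Function.comp_def] using h2

lemma P0_eq {f : ℝ × ℝ × ℝ → E} (hf : Differentiable ℝ f) (p : ℝ × ℝ × ℝ) :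
    P0 f p = fderiv ℝ f p (1, 0, 0) := (hasDerivAt_slice0 hf p).deriv

lemma P1_eq {f : ℝ × ℝ × ℝ → E} (hf : Differentiable ℝ f) (p : ℝ × ℝ × ℝ) :
    P1 f p = fderiv ℝ f p (0, 1, 0) := (hasDerivAt_slice1 hf p).deriv

lemma P2_eq {f : ℝ × ℝ × ℝ → E} (hf : Differentiable ℝ f) (p : ℝ × ℝ × ℝ) :
    P2 f p = fderiv ℝ f p (0, 0, 1) := (hasDerivAt_slice2 hf p).deriv

lemma P0_hasDerivAt {f : ℝ × ℝ × ℝ → E} (hf : Differentiable ℝ f) (p : ℝ × ℝ × ℝ) :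
    HasDerivAt (fun s => f (s, p.2)) (P0 f p) p.1 := by
  rw [P0_eq hf]; exact hasDerivAt_slice0 hf p

lemma P1_hasDerivAt {f : ℝ × ℝ × ℝ → E} (hf : Differentiable ℝ f) (p : ℝ × ℝ × ℝ) :
    HasDerivAt (fun s => f (p.1, s, p.2.2)) (P1 f p) p.2.1 := by
  rw [P1_eq hf]; exact hasDerivAt_slice1 hf p

lemma P2_hasDerivAt {f : ℝ × ℝ × ℝ → E} (hf : Differentiable ℝ f) (p : ℝ × ℝ × ℝ) :
    HasDerivAt (fun s => f (p.1, p.2.1, s)) (P2 f p) p.2.2 := by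
  rw [P2_eq hf]; exact hasDerivAt_slice2 hf p

lemma contDiff_P0 {f : ℝ × ℝ × ℝ → E} (hf : ContDiff ℝ (⊤:ℕ∞) f) : ContDiff ℝ (⊤:ℕ∞) (P0 f) := by
  have h : P0 f = fun p => (ContinuousLinearMap.apply ℝ E ((1:ℝ),(0:ℝ),(0:ℝ))) (fderiv ℝ f p) :=
    funext fun p => P0_eq (hf.differentiable (by simp)) p
  rw [h]
  exact (ContinuousLinearMap.apply ℝ E _).contDiff.comp (hf.fderiv_right (m := (⊤:ℕ∞)) (by simp))

lemma contDiff_P1 {f : ℝ × ℝ × ℝ → E} (hf : ContDiff ℝ (⊤:ℕ∞) f) : ContDiff ℝ (⊤:ℕ∞) (P1 f) := by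
  have h : P1 f = fun p => (ContinuousLinearMap.apply ℝ E ((0:ℝ),(1:ℝ),(0:ℝ))) (fderiv ℝ f p) :=
    funext fun p => P1_eq (hf.differentiable (by simp)) p
  rw [h]
  exact (ContinuousLinearMap.apply ℝ E _).contDiff.comp (hf.fderiv_right (m := (⊤:ℕ∞)) (by simp))

lemma contDiff_P2 {f : ℝ × ℝ × ℝ → E} (hf : ContDiff ℝ (⊤:ℕ∞) f) : ContDiff ℝ (⊤:ℕ∞) (P2 f) := by
  have h : P2 f = fun p => (ContinuousLinearMap.apply ℝ E ((0:ℝ),(0:ℝ),(1:ℝ))) (fderiv ℝ f p) :=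
    funext fun p => P2_eq (hf.differentiable (by simp)) p
  rw [h]
  exact (ContinuousLinearMap.apply ℝ E _).contDiff.comp (hf.fderiv_right (m := (⊤:ℕ∞)) (by simp))

lemma fderiv_dir_apply {f : ℝ × ℝ × ℝ → E} (hf : ContDiff ℝ (⊤:ℕ∞) f) (p v w : ℝ × ℝ × ℝ) :
    fderiv ℝ (fun q => fderiv ℝ f q v) p w = fderiv ℝ (fderiv ℝ f) p w v := by
  have h := ((ContinuousLinearMap.apply ℝ E v).hasFDerivAt).comp p
    (((hf.fderiv_right (m := (⊤:ℕ∞)) (by simp)).differentiable (by simp) p).hasFDerivAt)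
  have h2 : fderiv ℝ (fun q => fderiv ℝ f q v) p
      = ((ContinuousLinearMap.apply ℝ E v).comp (fderiv ℝ (fderiv ℝ f) p)) := h.fderiv
  rw [h2]; rfl

lemma second_symm {f : ℝ × ℝ × ℝ → E} (hf : ContDiff ℝ (⊤:ℕ∞) f) (p v w : ℝ × ℝ × ℝ) :
    fderiv ℝ (fderiv ℝ f) p v w = fderiv ℝ (fderiv ℝ f) p w v :=
  second_derivative_symmetric (fun y => (hf.differentiable (by simp) y).hasFDerivAt)
    (((hf.fderiv_right (m := (⊤:ℕ∞)) (by simp)).differentiable (by simp) p).hasFDerivAt) v w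



lemma P1_P2_comm {f : ℝ × ℝ × ℝ → E} (hf : ContDiff ℝ (⊤:ℕ∞) f) (p : ℝ × ℝ × ℝ) :
    P1 (P2 f) p = P2 (P1 f) p := by
  have hd := hf.differentiable (by simp)
  have h2f : P2 f = fun q => fderiv ℝ f q (0, 0, 1) := funext fun q => P2_eq hd q
  have h1f : P1 f = fun q => fderiv ℝ f q (0, 1, 0) := funext fun q => P1_eq hd q
  rw [P1_eq ((contDiff_P2 hf).differentiable (by simp)) p, P2_eq ((contDiff_P1 hf).differentiable (by simp)) p,
    h2f, h1f, fderiv_dir_apply hf, fderiv_dir_apply hf, second_symm hf]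

lemma P1_P0_comm {f : ℝ × ℝ × ℝ → E} (hf : ContDiff ℝ (⊤:ℕ∞) f) (p : ℝ × ℝ × ℝ) :
    P1 (P0 f) p = P0 (P1 f) p := by
  have hd := hf.differentiable (by simp)
  have h0f : P0 f = fun q => fderiv ℝ f q (1, 0, 0) := funext fun q => P0_eq hd q
  have h1f : P1 f = fun q => fderiv ℝ f q (0, 1, 0) := funext fun q => P1_eq hd q
  rw [P1_eq ((contDiff_P0 hf).differentiable (by simp)) p, P0_eq ((contDiff_P1 hf).differentiable (by simp)) p,
    h0f, h1f, fderiv_dir_apply hf, fderiv_dir_apply hf, second_symm hf]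

lemma P2_P0_comm {f : ℝ × ℝ × ℝ → E} (hf : ContDiff ℝ (⊤:ℕ∞) f) (p : ℝ × ℝ × ℝ) :
    P2 (P0 f) p = P0 (P2 f) p := by
  have hd := hf.differentiable (by simp)
  have h0f : P0 f = fun q => fderiv ℝ f q (1, 0, 0) := funext fun q => P0_eq hd q
  have h2f : P2 f = fun q => fderiv ℝ f q (0, 0, 1) := funext fun q => P2_eq hd q
  rw [P2_eq ((contDiff_P0 hf).differentiable (by simp)) p, P0_eq ((contDiff_P2 hf).differentiable (by simp)) p,
    h0f, h2f, fderiv_dir_apply hf, fderiv_dir_apply hf, second_symm hf]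

lemma P0_add {f g : ℝ × ℝ × ℝ → E} (hf : Differentiable ℝ f) (hg : Differentiable ℝ g)
    (p : ℝ × ℝ × ℝ) : P0 (fun q => f q + g q) p = P0 f p + P0 g p :=
  ((P0_hasDerivAt hf p).add (P0_hasDerivAt hg p)).deriv

lemma P1_add {f g : ℝ × ℝ × ℝ → E} (hf : Differentiable ℝ f) (hg : Differentiable ℝ g)
    (p : ℝ × ℝ × ℝ) : P1 (fun q => f q + g q) p = P1 f p + P1 g p :=
  ((P1_hasDerivAt hf p).add (P1_hasDerivAt hg p)).deriv

lemma P2_add {f g : ℝ × ℝ × ℝ → E} (hf : Differentiable ℝ f) (hg : Differentiable ℝ g)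
    (p : ℝ × ℝ × ℝ) : P2 (fun q => f q + g q) p = P2 f p + P2 g p :=
  ((P2_hasDerivAt hf p).add (P2_hasDerivAt hg p)).deriv

lemma P0_sub {f g : ℝ × ℝ × ℝ → E} (hf : Differentiable ℝ f) (hg : Differentiable ℝ g)
    (p : ℝ × ℝ × ℝ) : P0 (fun q => f q - g q) p = P0 f p - P0 g p :=
  ((P0_hasDerivAt hf p).sub (P0_hasDerivAt hg p)).deriv

lemma P1_sub {f g : ℝ × ℝ × ℝ → E} (hf : Differentiable ℝ f) (hg : Differentiable ℝ g)
    (p : ℝ × ℝ × ℝ) : P1 (fun q => f q - g q) p = P1 f p - P1 g p :=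
  ((P1_hasDerivAt hf p).sub (P1_hasDerivAt hg p)).deriv

lemma P2_sub {f g : ℝ × ℝ × ℝ → E} (hf : Differentiable ℝ f) (hg : Differentiable ℝ g)
    (p : ℝ × ℝ × ℝ) : P2 (fun q => f q - g q) p = P2 f p - P2 g p :=
  ((P2_hasDerivAt hf p).sub (P2_hasDerivAt hg p)).deriv

end aux

section algC
variable {𝔸 : Type*} [NormedRing 𝔸] [NormedAlgebra ℝ 𝔸]

lemma P1_mul {f g : ℝ × ℝ × ℝ → 𝔸} (hf : Differentiable ℝ f) (hg : Differentiable ℝ g)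
    (p : ℝ × ℝ × ℝ) : P1 (fun q => f q * g q) p = P1 f p * g p + f p * P1 g p :=
  ((P1_hasDerivAt hf p).mul (P1_hasDerivAt hg p)).deriv

lemma P2_mul {f g : ℝ × ℝ × ℝ → 𝔸} (hf : Differentiable ℝ f) (hg : Differentiable ℝ g)
    (p : ℝ × ℝ × ℝ) : P2 (fun q => f q * g q) p = P2 f p * g p + f p * P2 g p :=
  ((P2_hasDerivAt hf p).mul (P2_hasDerivAt hg p)).deriv

lemma P1_const_mul (c : 𝔸) {f : ℝ × ℝ × ℝ → 𝔸} (hf : Differentiable ℝ f)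
    (p : ℝ × ℝ × ℝ) : P1 (fun q => c * f q) p = c * P1 f p :=
  ((P1_hasDerivAt hf p).const_mul c).deriv

lemma P2_const_mul (c : 𝔸) {f : ℝ × ℝ × ℝ → 𝔸} (hf : Differentiable ℝ f)
    (p : ℝ × ℝ × ℝ) : P2 (fun q => c * f q) p = c * P2 f p :=
  ((P2_hasDerivAt hf p).const_mul c).deriv

end algC

lemma P1_conj {f : ℝ × ℝ × ℝ → ℂ} (hf : Differentiable ℝ f) (p : ℝ × ℝ × ℝ) :
    P1 (fun q => (starRingEnd ℂ) (f q)) p = (starRingEnd ℂ) (P1 f p) :=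
  ((P1_hasDerivAt hf p).star).deriv

lemma P2_conj {f : ℝ × ℝ × ℝ → ℂ} (hf : Differentiable ℝ f) (p : ℝ × ℝ × ℝ) :
    P2 (fun q => (starRingEnd ℂ) (f q)) p = (starRingEnd ℂ) (P2 f p) :=
  ((P2_hasDerivAt hf p).star).deriv

lemma P1_im {f : ℝ × ℝ × ℝ → ℂ} (hf : Differentiable ℝ f) (p : ℝ × ℝ × ℝ) :
    P1 (fun q => (f q).im) p = (P1 f p).im :=
  (Complex.imCLM.hasFDerivAt.comp_hasDerivAt _ (P1_hasDerivAt hf p)).deriv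

lemma P2_im {f : ℝ × ℝ × ℝ → ℂ} (hf : Differentiable ℝ f) (p : ℝ × ℝ × ℝ) :
    P2 (fun q => (f q).im) p = (P2 f p).im :=
  (Complex.imCLM.hasFDerivAt.comp_hasDerivAt _ (P2_hasDerivAt hf p)).deriv

lemma P1_ofReal {f : ℝ × ℝ × ℝ → ℝ} (hf : Differentiable ℝ f) (p : ℝ × ℝ × ℝ) :
    P1 (fun q => ((f q : ℝ) : ℂ)) p = ((P1 f p : ℝ) : ℂ) :=
  (Complex.ofRealCLM.hasFDerivAt.comp_hasDerivAt _ (P1_hasDerivAt hf p)).deriv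

lemma P2_ofReal {f : ℝ × ℝ × ℝ → ℝ} (hf : Differentiable ℝ f) (p : ℝ × ℝ × ℝ) :
    P2 (fun q => ((f q : ℝ) : ℂ)) p = ((P2 f p : ℝ) : ℂ) :=
  (Complex.ofRealCLM.hasFDerivAt.comp_hasDerivAt _ (P2_hasDerivAt hf p)).deriv


lemma contDiff_ofRealC {A : ℝ × ℝ × ℝ → ℝ} (hA : ContDiff ℝ (⊤:ℕ∞) A) :
    ContDiff ℝ (⊤:ℕ∞) (fun q => ((A q : ℝ) : ℂ)) := Complex.ofRealCLM.contDiff.comp hA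

lemma contDiff_CD1 {ψ : ℝ × ℝ × ℝ → ℂ} {A1 : ℝ × ℝ × ℝ → ℝ}
    (hψ : ContDiff ℝ (⊤:ℕ∞) ψ) (hA1 : ContDiff ℝ (⊤:ℕ∞) A1) :
    ContDiff ℝ (⊤:ℕ∞) (CD1 A1 ψ) := by
  have h : CD1 A1 ψ = fun q => P1 ψ q + (Complex.I * ((A1 q : ℝ) : ℂ)) * ψ q := by
    funext q; simp [CD1, mul_assoc]
  rw [h]
  exact (contDiff_P1 hψ).add ((contDiff_const.mul (contDiff_ofRealC hA1)).mul hψ)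

lemma contDiff_CD2 {ψ : ℝ × ℝ × ℝ → ℂ} {A2 : ℝ × ℝ × ℝ → ℝ}
    (hψ : ContDiff ℝ (⊤:ℕ∞) ψ) (hA2 : ContDiff ℝ (⊤:ℕ∞) A2) :
    ContDiff ℝ (⊤:ℕ∞) (CD2 A2 ψ) := by
  have h : CD2 A2 ψ = fun q => P2 ψ q + (Complex.I * ((A2 q : ℝ) : ℂ)) * ψ q := by
    funext q; simp [CD2, mul_assoc]
  rw [h]
  exact (contDiff_P2 hψ).add ((contDiff_const.mul (contDiff_ofRealC hA2)).mul hψ)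

lemma contDiff_conjC {ψ : ℝ × ℝ × ℝ → ℂ} (hψ : ContDiff ℝ (⊤:ℕ∞) ψ) :
    ContDiff ℝ (⊤:ℕ∞) (fun q => (starRingEnd ℂ) (ψ q)) := by
  have h : (fun q => (starRingEnd ℂ) (ψ q)) = fun q => Complex.conjCLE (ψ q) := by
    funext q; simp
  rw [h]
  exact Complex.conjCLE.contDiff.comp hψ

lemma key (ψ : ℝ × ℝ × ℝ → ℂ) (A1 A2 : ℝ × ℝ × ℝ → ℝ)
    (hψ : ContDiff ℝ (⊤:ℕ∞) ψ) (hA1 : ContDiff ℝ (⊤:ℕ∞) A1) (hA2 : ContDiff ℝ (⊤:ℕ∞) A2)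
    (p : ℝ × ℝ × ℝ) :
    P1 (fun q => ((starRingEnd ℂ) (ψ q) * CD2 A2 ψ q).im) p
      - P2 (fun q => ((starRingEnd ℂ) (ψ q) * CD1 A1 ψ q).im) p
    = -2 * ((starRingEnd ℂ) (CD2 A2 ψ p) * CD1 A1 ψ p).im
      + F12 A1 A2 p * Complex.normSq (ψ p) := by
  have dψ : Differentiable ℝ ψ := hψ.differentiable (by simp)
  have dA1 : Differentiable ℝ A1 := hA1.differentiable (by simp)
  have dA2 : Differentiable ℝ A2 := hA2.differentiable (by simp)
  have dcψ : Differentiable ℝ (fun q => (starRingEnd ℂ) (ψ q)) :=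
    (contDiff_conjC hψ).differentiable (by simp)
  have dCD1 : Differentiable ℝ (CD1 A1 ψ) :=
    (contDiff_CD1 hψ hA1).differentiable (by simp)
  have dCD2 : Differentiable ℝ (CD2 A2 ψ) :=
    (contDiff_CD2 hψ hA2).differentiable (by simp)
  have dA1C : Differentiable ℝ (fun q => ((A1 q : ℝ) : ℂ)) :=
    (contDiff_ofRealC hA1).differentiable (by simp)
  have dA2C : Differentiable ℝ (fun q => ((A2 q : ℝ) : ℂ)) :=
    (contDiff_ofRealC hA2).differentiable (by simp)
  have dIA1 : Differentiable ℝ (fun q => Complex.I * ((A1 q : ℝ) : ℂ)) :=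
    (differentiable_const _).mul dA1C
  have dIA2 : Differentiable ℝ (fun q => Complex.I * ((A2 q : ℝ) : ℂ)) :=
    (differentiable_const _).mul dA2C
  have dP1ψ : Differentiable ℝ (P1 ψ) := (contDiff_P1 hψ).differentiable (by simp)
  have dP2ψ : Differentiable ℝ (P2 ψ) := (contDiff_P2 hψ).differentiable (by simp)
  have e2 : P1 (CD2 A2 ψ) p = P1 (P2 ψ) p + (Complex.I * ((P1 A2 p : ℝ) : ℂ) * ψ p
      + Complex.I * ((A2 p : ℝ) : ℂ) * P1 ψ p) := by
    have h0 : CD2 A2 ψ = fun q => P2 ψ q + (Complex.I * ((A2 q : ℝ) : ℂ)) * ψ q := by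
      funext q; simp [CD2, mul_assoc]
    rw [h0, P1_add (g := fun q => Complex.I * ((A2 q : ℝ) : ℂ) * ψ q) dP2ψ (dIA2.mul dψ) p, P1_mul dIA2 dψ p, P1_const_mul Complex.I dA2C p,
      P1_ofReal dA2 p]
  have e1 : P2 (CD1 A1 ψ) p = P2 (P1 ψ) p + (Complex.I * ((P2 A1 p : ℝ) : ℂ) * ψ p
      + Complex.I * ((A1 p : ℝ) : ℂ) * P2 ψ p) := by
    have h0 : CD1 A1 ψ = fun q => P1 ψ q + (Complex.I * ((A1 q : ℝ) : ℂ)) * ψ q := by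
      funext q; simp [CD1, mul_assoc]
    rw [h0, P2_add (g := fun q => Complex.I * ((A1 q : ℝ) : ℂ) * ψ q) dP1ψ (dIA1.mul dψ) p, P2_mul dIA1 dψ p, P2_const_mul Complex.I dA1C p,
      P2_ofReal dA1 p]
  rw [P1_im (f := fun q => (starRingEnd ℂ) (ψ q) * CD2 A2 ψ q) (dcψ.mul dCD2) p, P2_im (f := fun q => (starRingEnd ℂ) (ψ q) * CD1 A1 ψ q) (dcψ.mul dCD1) p, P1_mul dcψ dCD2 p, P2_mul dcψ dCD1 p,
    P1_conj dψ p, P2_conj dψ p, e2, e1, P1_P2_comm hψ p]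
  simp only [CD1, CD2, F12, Complex.add_im, Complex.add_re, Complex.mul_im, Complex.mul_re,
    Complex.conj_re, Complex.conj_im, Complex.I_re, Complex.I_im, Complex.ofReal_re,
    Complex.ofReal_im, Complex.normSq_apply, Complex.sub_re, Complex.sub_im,
    Complex.ofReal_sub]
  ring

theorem stmt19 (ψ1 ψ2 : ℝ × ℝ × ℝ → ℂ) (A0 A1 A2 : ℝ × ℝ × ℝ → ℝ) (μ : ℝ)
    (hμ : μ = 1 ∨ μ = -1) (T : ℝ) (hT : 0 ≤ T)
    (hψ1 : ContDiff ℝ (⊤ : ℕ∞) ψ1) (hψ2 : ContDiff ℝ (⊤ : ℕ∞) ψ2)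
    (hA0 : ContDiff ℝ (⊤ : ℕ∞) A0) (hA1 : ContDiff ℝ (⊤ : ℕ∞) A1) (hA2 : ContDiff ℝ (⊤ : ℕ∞) A2)
    -- gradient-flow evolution of the fields
    (hev1 : ∀ p, CD0 A0 ψ1 p
      = CD1 A1 (CD1 A1 ψ1) p + CD2 A2 (CD2 A2 ψ1) p
        + Complex.I * (μ : ℂ) * ((((starRingEnd ℂ) (ψ2 p) * ψ1 p).im : ℝ) : ℂ) * ψ2 p)
    (hev2 : ∀ p, CD0 A0 ψ2 p
      = CD1 A1 (CD1 A1 ψ2) p + CD2 A2 (CD2 A2 ψ2) p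
        - Complex.I * (μ : ℂ) * ((((starRingEnd ℂ) (ψ2 p) * ψ1 p).im : ℝ) : ℂ) * ψ1 p)
    -- F₀ⱼ = μ Im(ψ̄ₖ Dⱼψₖ) − ∂ₖ Fⱼₖ
    (hF01 : ∀ p, F01 A0 A1 p
      = μ * (((starRingEnd ℂ) (ψ1 p) * CD1 A1 ψ1 p).im
          + ((starRingEnd ℂ) (ψ2 p) * CD1 A1 ψ2 p).im)
        - P2 (F12 A1 A2) p)
    (hF02 : ∀ p, F02 A0 A2 p
      = μ * (((starRingEnd ℂ) (ψ1 p) * CD2 A2 ψ1 p).im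
          + ((starRingEnd ℂ) (ψ2 p) * CD2 A2 ψ2 p).im)
        + P1 (F12 A1 A2) p) :
    ∀ p : ℝ × ℝ × ℝ,
      P0 (F12 A1 A2) p - (P1 (P1 (F12 A1 A2)) p + P2 (P2 (F12 A1 A2)) p)
        = μ * ( -2 * (((starRingEnd ℂ) (CD2 A2 ψ1 p) * CD1 A1 ψ1 p).im
                + ((starRingEnd ℂ) (CD2 A2 ψ2 p) * CD1 A1 ψ2 p).im)
            + F12 A1 A2 p * (Complex.normSq (ψ1 p) + Complex.normSq (ψ2 p)) ) := by
  intro p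
  have hψ1' : ContDiff ℝ (⊤:ℕ∞) ψ1 := hψ1.of_le (by simp)
  have hψ2' : ContDiff ℝ (⊤:ℕ∞) ψ2 := hψ2.of_le (by simp)
  have hA0' : ContDiff ℝ (⊤:ℕ∞) A0 := hA0.of_le (by simp)
  have hA1' : ContDiff ℝ (⊤:ℕ∞) A1 := hA1.of_le (by simp)
  have hA2' : ContDiff ℝ (⊤:ℕ∞) A2 := hA2.of_le (by simp)
  have hF12C : ContDiff ℝ (⊤:ℕ∞) (F12 A1 A2) := by
    have h : F12 A1 A2 = fun q => P1 A2 q - P2 A1 q := rfl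
    rw [h]; exact (contDiff_P1 hA2').sub (contDiff_P2 hA1')
  have dP1A2 : Differentiable ℝ (P1 A2) := (contDiff_P1 hA2').differentiable (by simp)
  have dP2A1 : Differentiable ℝ (P2 A1) := (contDiff_P2 hA1').differentiable (by simp)
  have dP0A2 : Differentiable ℝ (P0 A2) := (contDiff_P0 hA2').differentiable (by simp)
  have dP2A0 : Differentiable ℝ (P2 A0) := (contDiff_P2 hA0').differentiable (by simp)
  have dP0A1 : Differentiable ℝ (P0 A1) := (contDiff_P0 hA1').differentiable (by simp)
  have dP1A0 : Differentiable ℝ (P1 A0) := (contDiff_P1 hA0').differentiable (by simp)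
  have dP1F12 : Differentiable ℝ (P1 (F12 A1 A2)) :=
    (contDiff_P1 hF12C).differentiable (by simp)
  have dP2F12 : Differentiable ℝ (P2 (F12 A1 A2)) :=
    (contDiff_P2 hF12C).differentiable (by simp)
  -- step 1 : ∂ₜ F₁₂ = ∂₁ F₀₂ - ∂₂ F₀₁
  have s1 : P0 (F12 A1 A2) p = P0 (P1 A2) p - P0 (P2 A1) p := by
    have h : F12 A1 A2 = fun q => P1 A2 q - P2 A1 q := rfl
    rw [h, P0_sub dP1A2 dP2A1 p]
  have s2 : P1 (F02 A0 A2) p = P1 (P0 A2) p - P1 (P2 A0) p := by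
    have h : F02 A0 A2 = fun q => P0 A2 q - P2 A0 q := rfl
    rw [h, P1_sub dP0A2 dP2A0 p]
  have s3 : P2 (F01 A0 A1) p = P2 (P0 A1) p - P2 (P1 A0) p := by
    have h : F01 A0 A1 = fun q => P0 A1 q - P1 A0 q := rfl
    rw [h, P2_sub dP0A1 dP1A0 p]
  have step1 : P0 (F12 A1 A2) p = P1 (F02 A0 A2) p - P2 (F01 A0 A1) p := by
    rw [s1, s2, s3, P1_P0_comm hA2' p, P2_P0_comm hA1' p, P1_P2_comm hA0' p]
    ring
  -- differentiability of the current densities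
  have dIm21 : Differentiable ℝ (fun q => ((starRingEnd ℂ) (ψ1 q) * CD2 A2 ψ1 q).im) :=
    Complex.imCLM.differentiable.comp
      (((contDiff_conjC hψ1').differentiable (by simp)).mul
        ((contDiff_CD2 hψ1' hA2').differentiable (by simp)))
  have dIm22 : Differentiable ℝ (fun q => ((starRingEnd ℂ) (ψ2 q) * CD2 A2 ψ2 q).im) :=
    Complex.imCLM.differentiable.comp
      (((contDiff_conjC hψ2').differentiable (by simp)).mul
        ((contDiff_CD2 hψ2' hA2').differentiable (by simp)))
  have dIm11 : Differentiable ℝ (fun q => ((starRingEnd ℂ) (ψ1 q) * CD1 A1 ψ1 q).im) :=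
    Complex.imCLM.differentiable.comp
      (((contDiff_conjC hψ1').differentiable (by simp)).mul
        ((contDiff_CD1 hψ1' hA1').differentiable (by simp)))
  have dIm12 : Differentiable ℝ (fun q => ((starRingEnd ℂ) (ψ2 q) * CD1 A1 ψ2 q).im) :=
    Complex.imCLM.differentiable.comp
      (((contDiff_conjC hψ2').differentiable (by simp)).mul
        ((contDiff_CD1 hψ2' hA1').differentiable (by simp)))
  -- step 2 : substitute the constraint equations
  have hF02fun : F02 A0 A2 = fun q =>
      μ * (((starRingEnd ℂ) (ψ1 q) * CD2 A2 ψ1 q).im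
        + ((starRingEnd ℂ) (ψ2 q) * CD2 A2 ψ2 q).im) + P1 (F12 A1 A2) q := funext hF02
  have hF01fun : F01 A0 A1 = fun q =>
      μ * (((starRingEnd ℂ) (ψ1 q) * CD1 A1 ψ1 q).im
        + ((starRingEnd ℂ) (ψ2 q) * CD1 A1 ψ2 q).im) - P2 (F12 A1 A2) q := funext hF01
  have calc2 : P1 (F02 A0 A2) p
      = μ * (P1 (fun q => ((starRingEnd ℂ) (ψ1 q) * CD2 A2 ψ1 q).im) p
          + P1 (fun q => ((starRingEnd ℂ) (ψ2 q) * CD2 A2 ψ2 q).im) p)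
        + P1 (P1 (F12 A1 A2)) p := by
    rw [hF02fun, P1_add (f := fun q => μ * (((starRingEnd ℂ) (ψ1 q) * CD2 A2 ψ1 q).im
          + ((starRingEnd ℂ) (ψ2 q) * CD2 A2 ψ2 q).im)) ((dIm21.add dIm22).const_mul μ) dP1F12 p,
      P1_const_mul μ (f := fun q => ((starRingEnd ℂ) (ψ1 q) * CD2 A2 ψ1 q).im
          + ((starRingEnd ℂ) (ψ2 q) * CD2 A2 ψ2 q).im) (dIm21.add dIm22) p, P1_add dIm21 dIm22 p]
  have calc3 : P2 (F01 A0 A1) p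
      = μ * (P2 (fun q => ((starRingEnd ℂ) (ψ1 q) * CD1 A1 ψ1 q).im) p
          + P2 (fun q => ((starRingEnd ℂ) (ψ2 q) * CD1 A1 ψ2 q).im) p)
        - P2 (P2 (F12 A1 A2)) p := by
    rw [hF01fun, P2_sub (f := fun q => μ * (((starRingEnd ℂ) (ψ1 q) * CD1 A1 ψ1 q).im
          + ((starRingEnd ℂ) (ψ2 q) * CD1 A1 ψ2 q).im)) ((dIm11.add dIm12).const_mul μ) dP2F12 p,
      P2_const_mul μ (f := fun q => ((starRingEnd ℂ) (ψ1 q) * CD1 A1 ψ1 q).im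
          + ((starRingEnd ℂ) (ψ2 q) * CD1 A1 ψ2 q).im) (dIm11.add dIm12) p, P2_add dIm11 dIm12 p]
  have k1 := key ψ1 A1 A2 hψ1' hA1' hA2' p
  have k2 := key ψ2 A1 A2 hψ2' hA1' hA2' p
  rw [step1, calc2, calc3]
  linear_combination μ * k1 + μ * k2
end
end
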